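/- Let X be a finite partially ordered set whose comparability graph G is connected, let T be a spanning tree of G, let R be a ring, and let φ be a multiplicative automorphism of I(X,R) associated with a coherent system c. Then φ is inner if and only if for every pair x < y that is not a tree edge and every path p in T from x to y, the weight of p equals c x y (equivalently, every fundamental cycle of G with respect to T has weight 1). -/

import Mathlib

/-- A ring automorphism of the incidence algebra is *multiplicative* if it fixes every
function supported on the diagonal and maps functions vanishing on the diagonal to
functions vanishing on the diagonal. -/
def IsMultAut {X R : Type*} [Preorder X] [LocallyFiniteOrder X] [DecidableEq X] [Ring R]
    (φ : RingAut (IncidenceAlgebra R X)) : Prop :=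
  (∀ f : IncidenceAlgebra R X, (∀ x y : X, x ≠ y → f x y = 0) → φ f = f) ∧
  (∀ f : IncidenceAlgebra R X, (∀ x : X, f x x = 0) → ∀ x : X, (φ f) x x = 0)

/-- The comparability graph of a partially ordered set: `x` and `y` are adjacent iff
they are distinct and comparable. -/
def compGraph (X : Type*) [PartialOrder X] : SimpleGraph X where
  Adj x y := x < y ∨ y < x
  symm := ⟨fun _ _ h => h.symm⟩
  loopless := ⟨fun x h => h.elim (lt_irrefl x) (lt_irrefl x)⟩

open scoped Classical in
/-- The weight of a walk with respect to a system `c`: the product over the darts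
`(s, t)` of the walk, in order, of `c s t` if `s < t` and of `(c t s)⁻¹` if `t < s`. -/
noncomputable def walkWeight {X R : Type*} [PartialOrder X] [Ring R]
    (c : X → X → R) {H : SimpleGraph X} {x y : X} (p : H.Walk x y) : R :=
  (p.darts.map fun d => if d.toProd.1 < d.toProd.2 then c d.toProd.1 d.toProd.2
    else Ring.inverse (c d.toProd.2 d.toProd.1)).prod

/-!
Testing an inner `φ = u⁻¹ * (·) * u` on the matrix unit at `(x, y)` gives
`c x y = (u⁻¹) x x * u y y`, i.e. `c x y = σ x⁻¹ * σ y` with `σ x = u x x`, so the weight of every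
walk from `x` to `y` telescopes to `σ x⁻¹ * σ y`. Conversely, rooting the tree at `r` and letting
`σ y` be the weight of the tree path from `r` to `y`, the weight condition says exactly that
`c x y = σ x⁻¹ * σ y` for all `x < y`; as `σ` takes central values, `φ` is conjugation by the
diagonal unit `σ`.
-/

open SimpleGraph

namespace IncidenceAlgebra

variable {X R : Type*} [PartialOrder X] [Semiring R]

lemma mul_apply_self [LocallyFiniteOrder X] (f g : IncidenceAlgebra R X) (a : X) :
    (f * g) a a = f a a * g a a := by
  simp [Finset.Icc_self]

variable [DecidableEq X]

def diag (σ : X → R) : IncidenceAlgebra R X :=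
  ⟨fun a b => if a = b then σ a else 0, fun _ _ h => if_neg fun hab => h hab.le⟩

@[simp] lemma diag_apply (σ : X → R) (a b : X) : diag σ a b = if a = b then σ a else 0 := rfl

lemma diag_one : diag (fun _ : X => (1 : R)) = 1 := by
  ext a b
  simp

def single (a b : X) (hab : a ≤ b) : IncidenceAlgebra R X :=
  ⟨fun x y => if x = a ∧ y = b then 1 else 0,
    fun _ _ h => if_neg (by rintro ⟨rfl, rfl⟩; exact h hab)⟩

@[simp] lemma single_apply (a b : X) (hab : a ≤ b) (x y : X) :
    single (R := R) a b hab x y = if x = a ∧ y = b then 1 else 0 := rfl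

variable [LocallyFiniteOrder X]

lemma diag_mul_apply (σ : X → R) (f : IncidenceAlgebra R X) {a b : X} (hab : a ≤ b) :
    (diag σ * f) a b = σ a * f a b := by
  rw [mul_apply, Finset.sum_eq_single_of_mem a (Finset.mem_Icc.2 ⟨le_rfl, hab⟩)]
  · simp
  · intro x _ hxa
    rw [diag_apply, if_neg (Ne.symm hxa), zero_mul]

lemma mul_diag_apply (σ : X → R) (f : IncidenceAlgebra R X) {a b : X} (hab : a ≤ b) :
    (f * diag σ) a b = f a b * σ b := by
  rw [mul_apply, Finset.sum_eq_single_of_mem b (Finset.mem_Icc.2 ⟨hab, le_rfl⟩)]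
  · simp
  · intro x _ hxb
    rw [diag_apply, if_neg hxb, mul_zero]

lemma diag_mul_diag (σ τ : X → R) : diag σ * diag τ = diag (σ * τ) := by
  ext a b hab
  rw [mul_diag_apply _ _ hab]
  by_cases h : a = b <;> simp [h]

def diagUnits (σ : X → Rˣ) : (IncidenceAlgebra R X)ˣ where
  val := diag fun x => σ x
  inv := diag fun x => ↑(σ x)⁻¹
  val_inv := by simp [diag_mul_diag, Pi.mul_def, diag_one]
  inv_val := by simp [diag_mul_diag, Pi.mul_def, diag_one]

def diagEntryUnit (u : (IncidenceAlgebra R X)ˣ) (x : X) : Rˣ where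
  val := (u : IncidenceAlgebra R X) x x
  inv := (↑u⁻¹ : IncidenceAlgebra R X) x x
  val_inv := by rw [← mul_apply_self, u.mul_inv, one_apply, if_pos rfl]
  inv_val := by rw [← mul_apply_self, u.inv_mul, one_apply, if_pos rfl]

lemma mul_single_mul_apply (p q : IncidenceAlgebra R X) {a b : X} (hab : a ≤ b) :
    (p * single a b hab * q : IncidenceAlgebra R X) a b = p a a * q b b := by
  have hleft : ∀ z, z ≠ b → (p * single a b hab : IncidenceAlgebra R X) a z = 0 := fun z hz =>
    Finset.sum_eq_zero fun w _ => by simp [hz]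
  rw [mul_apply, Finset.sum_eq_single_of_mem b (Finset.mem_Icc.2 ⟨hab, le_rfl⟩)
      (fun z _ hz => by rw [hleft z hz, zero_mul]),
    mul_apply, Finset.sum_eq_single_of_mem a (Finset.mem_Icc.2 ⟨le_rfl, hab⟩)
      (fun w _ hwa => by simp [hwa])]
  simp

end IncidenceAlgebra

open IncidenceAlgebra

section Conjugation

variable {X R : Type*} [PartialOrder X] [LocallyFiniteOrder X] [DecidableEq X] [Semiring R]
  {φ : IncidenceAlgebra R X → IncidenceAlgebra R X} {c : X → X → R}

theorem eq_inv_mul_diagEntryUnit_of_conj (hφ : ∀ f x y, x < y → φ f x y = c x y * f x y)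
    {u : (IncidenceAlgebra R X)ˣ} (hu : ∀ f, φ f = ↑u⁻¹ * f * ↑u) {x y : X} (hxy : x < y) :
    c x y = ↑(diagEntryUnit u x)⁻¹ * diagEntryUnit u y := by
  have h := hφ (single x y hxy.le) x y hxy
  rw [hu, mul_single_mul_apply, single_apply, if_pos ⟨rfl, rfl⟩, mul_one] at h
  exact h.symm

theorem eq_conj_diagUnits (hφ : ∀ f x y, x < y → φ f x y = c x y * f x y)
    (hφ_diag : ∀ f x, φ f x x = f x x) (σ : X → Rˣ) (hσ_center : ∀ x, ↑(σ x) ∈ Set.center R)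
    (hσ : ∀ x y, x < y → c x y = ↑(σ x)⁻¹ * σ y) (f : IncidenceAlgebra R X) :
    φ f = ↑(diagUnits σ)⁻¹ * f * ↑(diagUnits σ) := by
  have hcomm : ∀ x (r : R), r * (σ x : R) = σ x * r := fun x =>
    Semigroup.mem_center_iff.1 (hσ_center x)
  ext a b hab
  show φ f a b = (diag (fun x => (((σ x)⁻¹ : Rˣ) : R)) * f * diag fun x => (σ x : R)) a b
  rw [mul_diag_apply _ _ hab, diag_mul_apply _ _ hab]
  rcases hab.eq_or_lt with rfl | hlt
  · rw [hφ_diag, mul_assoc, hcomm, Units.inv_mul_cancel_left]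
  · rw [hφ f a b hlt, hσ a b hlt, mul_assoc, mul_assoc, hcomm]

end Conjugation

def centralUnits (R : Type*) [Monoid R] : Submonoid R :=
  Submonoid.center R ⊓ IsUnit.submonoid R

lemma mem_centralUnits {R : Type*} [Monoid R] {r : R} :
    r ∈ centralUnits R ↔ r ∈ Set.center R ∧ IsUnit r :=
  Iff.rfl

lemma Ring.inverse_mem_centralUnits {R : Type*} [MonoidWithZero R] {r : R}
    (hr : r ∈ centralUnits R) : Ring.inverse r ∈ centralUnits R := by
  obtain ⟨hcenter, u, rfl⟩ := mem_centralUnits.1 hr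
  rw [Ring.inverse_unit]
  exact ⟨Set.units_inv_mem_center hcenter, u⁻¹.isUnit⟩

section Walks

variable {X R : Type*} [PartialOrder X] [Ring R] {c : X → X → R}

open scoped Classical in
noncomputable def edgeWeight (c : X → X → R) (s t : X) : R :=
  if s < t then c s t else Ring.inverse (c t s)

lemma edgeWeight_of_lt {s t : X} (h : s < t) : edgeWeight c s t = c s t := by
  simp [edgeWeight, h]

lemma edgeWeight_of_gt {s t : X} (h : t < s) : edgeWeight c s t = Ring.inverse (c t s) := by
  simp [edgeWeight, h.not_gt]

lemma edgeWeight_mul_edgeWeight (hc : ∀ x y, x < y → IsUnit (c x y)) {s t : X}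
    (h : s < t ∨ t < s) : edgeWeight c s t * edgeWeight c t s = 1 := by
  rcases h with h | h
  · rw [edgeWeight_of_lt h, edgeWeight_of_gt h, Ring.mul_inverse_cancel _ (hc s t h)]
  · rw [edgeWeight_of_gt h, edgeWeight_of_lt h, Ring.inverse_mul_cancel _ (hc t s h)]

lemma edgeWeight_mem_centralUnits (hc : ∀ x y, x < y → c x y ∈ centralUnits R) {s t : X}
    (h : s < t ∨ t < s) : edgeWeight c s t ∈ centralUnits R := by
  rcases h with h | h
  · rw [edgeWeight_of_lt h]; exact hc s t h
  · rw [edgeWeight_of_gt h]; exact Ring.inverse_mem_centralUnits (hc t s h)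

lemma edgeWeight_eq_of_eq_inv_mul {σ : X → Rˣ} (hσ : ∀ x y, x < y → c x y = ↑(σ x)⁻¹ * σ y)
    {s t : X} (h : s < t ∨ t < s) : edgeWeight c s t = ↑(σ s)⁻¹ * σ t := by
  rcases h with h | h
  · rw [edgeWeight_of_lt h, hσ s t h]
  · rw [edgeWeight_of_gt h, hσ t s h, ← Units.val_mul, Ring.inverse_unit, mul_inv_rev, inv_inv,
      Units.val_mul]

variable {H : SimpleGraph X}

@[simp] lemma walkWeight_nil {x : X} : walkWeight c (Walk.nil : H.Walk x x) = 1 := rfl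

@[simp] lemma walkWeight_cons {x y z : X} (h : H.Adj x y) (p : H.Walk y z) :
    walkWeight c (Walk.cons h p) = edgeWeight c x y * walkWeight c p := by
  simp [walkWeight, edgeWeight]

lemma walkWeight_append {x y z : X} (p : H.Walk x y) (q : H.Walk y z) :
    walkWeight c (p.append q) = walkWeight c p * walkWeight c q := by
  simp [walkWeight, Walk.darts_append]

lemma walkWeight_concat {x y z : X} (p : H.Walk x y) (h : H.Adj y z) :
    walkWeight c (p.concat h) = walkWeight c p * edgeWeight c y z := by
  simp [Walk.concat_eq_append, walkWeight_append]

lemma walkWeight_mem {S : Submonoid R} (hS : ∀ s t, H.Adj s t → edgeWeight c s t ∈ S)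
    {x y : X} (p : H.Walk x y) : walkWeight c p ∈ S := by
  induction p with
  | nil => exact S.one_mem
  | cons h p ih => rw [walkWeight_cons]; exact S.mul_mem (hS _ _ h) ih

theorem walkWeight_eq_inv_mul (hH : H ≤ compGraph X) {σ : X → Rˣ}
    (hσ : ∀ x y, x < y → c x y = ↑(σ x)⁻¹ * σ y) {x y : X} (p : H.Walk x y) :
    walkWeight c p = ↑(σ x)⁻¹ * σ y := by
  induction p with
  | nil => simp
  | cons h p ih =>
    rw [walkWeight_cons, ih, edgeWeight_eq_of_eq_inv_mul hσ (hH h), mul_assoc,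
      Units.mul_inv_cancel_left]

end Walks

section Trees

variable {X R : Type*} [PartialOrder X] [Ring R] {c : X → X → R} {T : SimpleGraph X}

theorem walkWeight_path_of_adj (hT : T.IsAcyclic)
    (hinv : ∀ s t, T.Adj s t → edgeWeight c s t * edgeWeight c t s = 1) {r s t : X}
    (p : T.Path r s) (q : T.Path r t) (h : T.Adj s t) :
    walkWeight c q.1 = walkWeight c p.1 * edgeWeight c s t := by
  -- one of the two root paths is the other one extended by the edge
  by_cases hs : s ∈ q.1.support
  · rw [hT.path_concat p.2 q.2 h hs, walkWeight_concat]
  · have ht : t ∈ p.1.support := hT.mem_support_of_ne_mem_support_of_adj_of_isPath p.2 q.2 h hs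
    rw [hT.path_concat q.2 p.2 h.symm ht, walkWeight_concat, mul_assoc, hinv t s h.symm, mul_one]

theorem walkWeight_path_eq_mul (hT : T.IsAcyclic)
    (hinv : ∀ s t, T.Adj s t → edgeWeight c s t * edgeWeight c t s = 1) {r a b : X}
    (pa : T.Path r a) (pb : T.Path r b) (q : T.Walk a b) :
    walkWeight c pb.1 = walkWeight c pa.1 * walkWeight c q := by
  classical
  induction q with
  | nil => rw [(hT.subsingleton_path r _).elim pa pb, walkWeight_nil, mul_one]
  | cons h q ih =>
    rw [ih ((pa.1.concat h).toPath), walkWeight_path_of_adj hT hinv pa _ h, walkWeight_cons,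
      mul_assoc]

theorem exists_eq_inv_mul_of_tree (hT : T ≤ compGraph X) (hTconn : T.Connected)
    (hTacyc : T.IsAcyclic) (hc : ∀ x y, x < y → c x y ∈ centralUnits R)
    (hpath : ∀ x y, x < y → ¬T.Adj x y → ∀ p : T.Walk x y, p.IsPath → walkWeight c p = c x y) :
    ∃ σ : X → Rˣ, (∀ x, ↑(σ x) ∈ Set.center R) ∧ ∀ x y, x < y → c x y = ↑(σ x)⁻¹ * σ y := by
  classical
  obtain ⟨r⟩ := hTconn.nonempty
  let path (a b : X) : T.Path a b := (hTconn.preconnected a b).some.toPath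
  have hinv : ∀ s t, T.Adj s t → edgeWeight c s t * edgeWeight c t s = 1 := fun s t h =>
    edgeWeight_mul_edgeWeight (fun x y hxy => (hc x y hxy).2) (hT h)
  have hroot : ∀ a, walkWeight c (path r a).1 ∈ Set.center R ∧ IsUnit (walkWeight c (path r a).1) :=
    fun a => mem_centralUnits.1 <|
      walkWeight_mem (fun s t h => edgeWeight_mem_centralUnits hc (hT h)) _
  have hweight_path : ∀ x y, x < y → walkWeight c (path x y).1 = c x y := by
    intro x y hxy
    by_cases hadj : T.Adj x y
    · rw [(hTacyc.subsingleton_path x y).elim (path x y) (Path.singleton hadj)]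
      simp [Path.singleton, edgeWeight_of_lt hxy]
    · exact hpath x y hxy hadj _ (path x y).2
  refine ⟨fun a => (hroot a).2.unit, fun a => (hroot a).1, fun x y hxy => ?_⟩
  beta_reduce
  rw [IsUnit.unit_spec, walkWeight_path_eq_mul hTacyc hinv (path r x) (path r y) (path x y).1,
    hweight_path x y hxy]
  exact (Units.inv_mul_cancel_left (hroot x).2.unit (c x y)).symm

end Trees

theorem inner_iff_tree_path_weights_general {X R : Type*} [PartialOrder X]
    [LocallyFiniteOrder X] [DecidableEq X] [Ring R]
    (T : SimpleGraph X) (hT : T ≤ compGraph X) (hTconn : T.Connected)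
    (hTacyc : T.IsAcyclic)
    (φ : RingAut (IncidenceAlgebra R X))
    (c : X → X → R)
    (hc : ∀ x y : X, x < y → c x y ∈ Set.center R ∧ IsUnit (c x y))
    (hassoc : ∀ f : IncidenceAlgebra R X,
      (∀ x y : X, x < y → (φ f) x y = c x y * f x y) ∧ (∀ x : X, (φ f) x x = f x x)) :
    (∃ u : (IncidenceAlgebra R X)ˣ, ∀ f : IncidenceAlgebra R X, φ f = ↑u⁻¹ * f * ↑u) ↔
    (∀ x y : X, x < y → ¬T.Adj x y →
      ∀ p : T.Walk x y, p.IsPath → walkWeight c p = c x y) := by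
  have hφ : ∀ f x y, x < y → φ f x y = c x y * f x y := fun f => (hassoc f).1
  constructor
  · rintro ⟨u, hu⟩ x y hxy _ p _
    have hσ := fun a b => eq_inv_mul_diagEntryUnit_of_conj hφ hu (x := a) (y := b)
    rw [walkWeight_eq_inv_mul hT hσ p, hσ x y hxy]
  · intro hpath
    obtain ⟨σ, hσ_center, hσ⟩ := exists_eq_inv_mul_of_tree hT hTconn hTacyc hc hpath
    exact ⟨diagUnits σ, eq_conj_diagUnits hφ (fun f => (hassoc f).2) σ hσ_center hσ⟩

/-- Given a spanning tree `T` of the connected comparability graph, a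
multiplicative automorphism associated with a coherent system `c` is inner iff for every
non-tree edge `x < y`, each path in `T` from `x` to `y` has weight `c x y`
(Corollary 3.10). -/
theorem inner_iff_tree_path_weights {X R : Type*} [PartialOrder X] [Fintype X]
    [LocallyFiniteOrder X] [DecidableEq X] [Ring R]
    (hG : (compGraph X).Connected)
    (T : SimpleGraph X) (hT : T ≤ compGraph X) (hTconn : T.Connected)
    (hTacyc : T.IsAcyclic)
    (φ : RingAut (IncidenceAlgebra R X)) (hφ : IsMultAut φ)
    (c : X → X → R)
    (hc : ∀ x y : X, x < y → c x y ∈ Set.center R ∧ IsUnit (c x y))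
    (hcoh : ∀ x z y : X, x < z → z < y → c x y = c x z * c z y)
    (hassoc : ∀ f : IncidenceAlgebra R X,
      (∀ x y : X, x < y → (φ f) x y = c x y * f x y) ∧ (∀ x : X, (φ f) x x = f x x)) :
    (∃ u : (IncidenceAlgebra R X)ˣ, ∀ f : IncidenceAlgebra R X, φ f = ↑u⁻¹ * f * ↑u) ↔
    (∀ x y : X, x < y → ¬T.Adj x y →
      ∀ p : T.Walk x y, p.IsPath → walkWeight c p = c x y) :=
  inner_iff_tree_path_weights_general T hT hTconn hTacyc φ c hc hassoc
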